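/- arXiv:2006.12748 — 4 statements merged into one kernel-verified Lean document; each statement's English description precedes it below -/
import Mathlib

section
/- Let A ∈ ℝ^{n×n} be a PSD matrix such that every row of A has Euclidean norm at most 1. Let k ≥ 1 be an integer, ε > 0, α ≥ 1, and β > 0. Let Z ∈ ℝ^{n×n} be a PSD matrix with trace(Z) ≤ 1 and ∑_{i,j} |Z_{i,j}| ≤ k. Let λ ≥ 0 and v ∈ ℝⁿ satisfy Zv = λv and ‖v‖₂ = 1, and set u = √λ · v. Assume trace(AZ) ≤ α·(uᵀAu) and ∑_{i,j} |u_i u_j| ≤ β·∑_{i,j} |Z_{i,j}|. Let s = ⌈9k²β²/ε²⌉, let S ⊆ {1,…,n} be a set with |S| = min(s,n) such that |u_i| ≥ |u_j| for all i ∈ S and j ∉ S, and define z ∈ ℝⁿ by z_i = u_i for i ∈ S and z_i = 0 for i ∉ S. Then ‖z‖₀ ≤ s, ‖z‖₂ ≤ 1, and zᵀAz ≥ (1/α)·trace(AZ) − ε. In particular, if additionally trace(AZ) ≥ xᵀAx for every x ∈ ℝⁿ with ‖x‖₂ ≤ 1 and ‖x‖₀ ≤ k, then zᵀAz ≥ (1/α)·xᵀAx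 − ε for every such x. -/
/-!
Split `u = z + w`, where `w` is the tail of `u` outside `S`. Every tail entry satisfies
`s |u_j| ≤ ‖u‖₁`, so `√s ‖w‖₂ ≤ ‖u‖₁`, while `‖u‖₁² = ∑ |u_i u_j| ≤ β k`. Because the rows of `A`
have norm at most one, `xᵀ A y ≤ ‖x‖₁ ‖y‖₂`; hence the cross and tail terms of
`uᵀAu = zᵀAz + 2 zᵀAw + wᵀAw` are at most `3 ‖u‖₁ ‖w‖₂ ≤ 3 k β / √s ≤ ε`. Finally
`‖z‖₂ ≤ ‖u‖₂ = √λ`, and `λ = vᵀZv ≤ tr Z ≤ 1`.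
-/

open Matrix

/-- Euclidean (ℓ₂) norm of a vector in ℝⁿ. -/
noncomputable def l2norm {n : ℕ} (x : Fin n → ℝ) : ℝ := Real.sqrt (∑ i, (x i) ^ 2)

/-- ℓ₀ "norm": number of nonzero entries of a vector. -/
noncomputable def l0norm {n : ℕ} (x : Fin n → ℝ) : ℕ := (Function.support x).ncard

theorem Matrix.sq_dotProduct_le {ι : Type*} [Fintype ι] (x y : ι → ℝ) :
    (x ⬝ᵥ y) ^ 2 ≤ (x ⬝ᵥ x) * (y ⬝ᵥ y) := by
  simpa only [dotProduct, sq] using Finset.sum_mul_sq_le_sq_mul_sq Finset.univ x y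

theorem Matrix.dotProduct_self_nonneg {ι : Type*} [Fintype ι] (x : ι → ℝ) : 0 ≤ x ⬝ᵥ x :=
  Finset.sum_nonneg fun i _ => mul_self_nonneg (x i)

theorem Matrix.PosSemidef.dotProduct_mulVec_le_trace_mul {ι : Type*} [Fintype ι]
    {Z : Matrix ι ι ℝ} (hZ : Z.PosSemidef) (v : ι → ℝ) :
    v ⬝ᵥ Z *ᵥ v ≤ Z.trace * (v ⬝ᵥ v) := by
  obtain ⟨m, w, rfl⟩ := posSemidef_iff_eq_sum_vecMulVec.mp hZ
  simp only [sum_mulVec, dotProduct_sum, trace_sum, Finset.sum_mul, vecMulVec_mulVec,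
    trace_vecMulVec, star_trivial, dotProduct_smul, op_smul_eq_mul]
  refine Finset.sum_le_sum fun i _ => ?_
  rw [dotProduct_comm v, ← sq]
  exact sq_dotProduct_le _ _

section Norms

variable {n : ℕ}

theorem l2norm_eq_sqrt_dotProduct (x : Fin n → ℝ) : l2norm x = √(x ⬝ᵥ x) := by
  simp only [l2norm, dotProduct, sq]

theorem l2norm_nonneg (x : Fin n → ℝ) : 0 ≤ l2norm x := Real.sqrt_nonneg _

theorem l2norm_sq (x : Fin n → ℝ) : l2norm x ^ 2 = x ⬝ᵥ x := by
  rw [l2norm_eq_sqrt_dotProduct, Real.sq_sqrt (dotProduct_self_nonneg x)]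

theorem l2norm_smul (c : ℝ) (x : Fin n → ℝ) : l2norm (c • x) = |c| * l2norm x := by
  rw [l2norm_eq_sqrt_dotProduct, l2norm_eq_sqrt_dotProduct, dotProduct_smul, smul_dotProduct,
    smul_eq_mul, smul_eq_mul, ← mul_assoc, Real.sqrt_mul (mul_self_nonneg c),
    Real.sqrt_mul_self_eq_abs]

theorem l2norm_le_l2norm_of_abs_le {x y : Fin n → ℝ} (h : ∀ i, |x i| ≤ |y i|) :
    l2norm x ≤ l2norm y :=
  Real.sqrt_le_sqrt <| Finset.sum_le_sum fun i _ => sq_le_sq.mpr (h i)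

theorem abs_dotProduct_le_l2norm_mul_l2norm (x y : Fin n → ℝ) :
    |x ⬝ᵥ y| ≤ l2norm x * l2norm y := by
  rw [l2norm_eq_sqrt_dotProduct, l2norm_eq_sqrt_dotProduct,
    ← Real.sqrt_mul (dotProduct_self_nonneg x)]
  exact Real.abs_le_sqrt (sq_dotProduct_le x y)

theorem l0norm_le_card {x : Fin n → ℝ} {S : Finset (Fin n)} (h : ∀ i ∉ S, x i = 0) :
    l0norm x ≤ S.card :=
  (Set.ncard_le_ncard (fun i (hi : x i ≠ 0) => by_contra fun hiS => hi (h i hiS))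
    S.finite_toSet).trans_eq (Set.ncard_coe_finset S)

end Norms

theorem dotProduct_mulVec_le_sum_abs_mul_l2norm {m n : ℕ} {A : Matrix (Fin m) (Fin n) ℝ}
    (hA : ∀ i, l2norm (A i) ≤ 1)
    (x : Fin m → ℝ) (y : Fin n → ℝ) : x ⬝ᵥ A *ᵥ y ≤ (∑ i, |x i|) * l2norm y := by
  rw [Finset.sum_mul]
  refine Finset.sum_le_sum fun i _ => ?_
  have hrow : |(A *ᵥ y) i| ≤ l2norm y :=
    calc |A i ⬝ᵥ y| ≤ l2norm (A i) * l2norm y := abs_dotProduct_le_l2norm_mul_l2norm _ _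
      _ ≤ l2norm y := mul_le_of_le_one_left (l2norm_nonneg y) (hA i)
  calc x i * (A *ᵥ y) i ≤ |x i| * |(A *ᵥ y) i| := (le_abs_self _).trans_eq (abs_mul _ _)
    _ ≤ |x i| * l2norm y := by gcongr

theorem dotProduct_mulVec_le_add_of_abs_le {n : ℕ} {A : Matrix (Fin n) (Fin n) ℝ}
    (hA : A.IsSymm) (hrows : ∀ i, l2norm (A i) ≤ 1) {u z : Fin n → ℝ}
    (hz : ∀ i, |z i| ≤ |u i|) (hw : ∀ i, |(u - z) i| ≤ |u i|) :
    u ⬝ᵥ A *ᵥ u ≤ z ⬝ᵥ A *ᵥ z + 3 * ((∑ i, |u i|) * l2norm (u - z)) := by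
  have hsplit : u ⬝ᵥ A *ᵥ u =
      z ⬝ᵥ A *ᵥ z + 2 * (z ⬝ᵥ A *ᵥ (u - z)) + (u - z) ⬝ᵥ A *ᵥ (u - z) := by
    have hsymm : (u - z) ⬝ᵥ A *ᵥ z = z ⬝ᵥ A *ᵥ (u - z) := by
      rw [dotProduct_comm, ← vecMul_transpose, hA.eq, ← dotProduct_mulVec]
    conv_lhs => rw [← add_sub_cancel z u]
    rw [mulVec_add, dotProduct_add, add_dotProduct, add_dotProduct, hsymm]
    ring
  have hzw := (dotProduct_mulVec_le_sum_abs_mul_l2norm hrows z (u - z)).trans <|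
    mul_le_mul_of_nonneg_right (Finset.sum_le_sum fun i _ => hz i) (l2norm_nonneg _)
  have hww := (dotProduct_mulVec_le_sum_abs_mul_l2norm hrows (u - z) (u - z)).trans <|
    mul_le_mul_of_nonneg_right (Finset.sum_le_sum fun i _ => hw i) (l2norm_nonneg _)
  linarith

theorem card_mul_abs_le_sum_abs {ι : Type*} [Fintype ι] {u : ι → ℝ} {S : Finset ι} {j : ι}
    (hj : ∀ i ∈ S, |u j| ≤ |u i|) : S.card * |u j| ≤ ∑ i, |u i| :=
  calc S.card * |u j| = ∑ _i ∈ S, |u j| := by rw [Finset.sum_const, nsmul_eq_mul]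
    _ ≤ ∑ i ∈ S, |u i| := Finset.sum_le_sum hj
    _ ≤ ∑ i, |u i| := Finset.sum_le_univ_sum_of_nonneg fun i => abs_nonneg _

theorem sqrt_mul_l2norm_sub_le {n s : ℕ} {u z : Fin n → ℝ} {S : Finset (Fin n)}
    (hScard : S.card = min s n) (hStop : ∀ i ∈ S, ∀ j ∉ S, |u j| ≤ |u i|)
    (hz : ∀ i, z i = if i ∈ S then u i else 0) :
    √s * l2norm (u - z) ≤ ∑ i, |u i| := by
  set a := ∑ i, |u i|
  have hpoint : ∀ j, s * ((u - z) j * (u - z) j) ≤ a * |u j| := by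
    intro j
    by_cases hj : j ∈ S
    · simp only [Pi.sub_apply, hz j, if_pos hj, sub_self, mul_zero]
      exact mul_nonneg (Finset.sum_nonneg fun i _ => abs_nonneg _) (abs_nonneg _)
    · -- `S` misses `j`, so `|S| < n` and the minimum `min s n` is `s`.
      have hcard : S.card = s := by
        have := Finset.card_lt_univ_of_notMem hj
        simp only [Fintype.card_fin] at this
        omega
      have hsj : (s : ℝ) * |u j| ≤ a :=
        hcard ▸ card_mul_abs_le_sum_abs fun i hi => hStop i hi j hj
      rw [Pi.sub_apply, hz j, if_neg hj, sub_zero, ← abs_mul_abs_self, ← mul_assoc]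
      exact mul_le_mul_of_nonneg_right hsj (abs_nonneg _)
  have hsq : (√s * l2norm (u - z)) ^ 2 ≤ a ^ 2 := by
    rw [mul_pow, Real.sq_sqrt (Nat.cast_nonneg s), l2norm_sq, sq, dotProduct, Finset.mul_sum,
      Finset.mul_sum]
    exact Finset.sum_le_sum fun j _ => hpoint j
  exact abs_le_of_sq_le_sq' hsq (Finset.sum_nonneg fun i _ => abs_nonneg _) |>.2

theorem three_mul_mul_le_of_sqrt_mul_le {a b c ε : ℝ} {s : ℕ} (hε : 0 < ε) (hc : 0 < c)
    (hs : 9 * c ^ 2 / ε ^ 2 ≤ s) (ha : a ^ 2 ≤ c) (hab : √s * b ≤ a) (hb : 0 ≤ b) :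
    3 * (a * b) ≤ ε := by
  have hsqrt : 3 * c / ε ≤ √s := Real.le_sqrt_of_sq_le (by convert hs using 1; ring)
  have hpos : 0 < √s := (div_pos (by positivity) hε).trans_le hsqrt
  have ha0 : 0 ≤ a := (mul_nonneg hpos.le hb).trans hab
  refine le_of_mul_le_mul_right ?_ hpos
  calc 3 * (a * b) * √s = 3 * a * (√s * b) := by ring
    _ ≤ 3 * a * a := by gcongr
    _ ≤ 3 * c := by nlinarith
    _ ≤ ε * √s := by rw [div_le_iff₀ hε] at hsqrt; linarith

theorem stmt1_general {n : ℕ} (A : Matrix (Fin n) (Fin n) ℝ) (hA : A.PosSemidef)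
    (hrows : ∀ i : Fin n, l2norm (A i) ≤ 1)
    (k : ℕ) (hk : 1 ≤ k) (ε : ℝ) (hε : 0 < ε) (α : ℝ) (hα : 1 ≤ α) (β : ℝ) (hβ : 0 < β)
    (Z : Matrix (Fin n) (Fin n) ℝ) (hZ : Z.PosSemidef) (hZtr : Z.trace ≤ 1)
    (hZ1 : ∑ i, ∑ j, |Z i j| ≤ (k : ℝ))
    (lam : ℝ) (v : Fin n → ℝ)
    (hv : Z.mulVec v = lam • v) (hvnorm : l2norm v = 1)
    (u : Fin n → ℝ) (hu : u = fun i => Real.sqrt lam * v i)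
    (hαZ : (A * Z).trace ≤ α * (u ⬝ᵥ A.mulVec u))
    (hβZ : ∑ i, ∑ j, |u i * u j| ≤ β * ∑ i, ∑ j, |Z i j|)
    (s : ℕ) (hs : s = ⌈9 * (k : ℝ) ^ 2 * β ^ 2 / ε ^ 2⌉₊)
    (S : Finset (Fin n)) (hScard : S.card = min s n)
    (hStop : ∀ i ∈ S, ∀ j ∉ S, |u j| ≤ |u i|)
    (z : Fin n → ℝ) (hz : ∀ i, z i = if i ∈ S then u i else 0) :
    l0norm z ≤ s ∧ l2norm z ≤ 1 ∧
    (1 / α) * (A * Z).trace - ε ≤ z ⬝ᵥ A.mulVec z ∧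
    ((∀ x : Fin n → ℝ, l2norm x ≤ 1 → l0norm x ≤ k → x ⬝ᵥ A.mulVec x ≤ (A * Z).trace) →
      ∀ x : Fin n → ℝ, l2norm x ≤ 1 → l0norm x ≤ k →
        (1 / α) * (x ⬝ᵥ A.mulVec x) - ε ≤ z ⬝ᵥ A.mulVec z) := by
  have hvv : v ⬝ᵥ v = 1 := by rw [← l2norm_sq, hvnorm, one_pow]
  have hlam1 : lam ≤ 1 :=
    calc lam = v ⬝ᵥ Z *ᵥ v := by rw [hv, dotProduct_smul, hvv, smul_eq_mul, mul_one]
      _ ≤ Z.trace * (v ⬝ᵥ v) := hZ.dotProduct_mulVec_le_trace_mul v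
      _ ≤ 1 := by rwa [hvv, mul_one]
  have hzu : ∀ i, |z i| ≤ |u i| := fun i => by rw [hz i]; split_ifs <;> simp
  have hwu : ∀ i, |(u - z) i| ≤ |u i| := fun i => by rw [Pi.sub_apply, hz i]; split_ifs <;> simp
  have hu1 : (∑ i, |u i|) ^ 2 ≤ k * β :=
    calc (∑ i, |u i|) ^ 2 = ∑ i, ∑ j, |u i * u j| := by simp_rw [sq, Finset.sum_mul_sum, abs_mul]
      _ ≤ β * ∑ i, ∑ j, |Z i j| := hβZ
      _ ≤ k * β := by rw [mul_comm]; gcongr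
  have herr : 3 * ((∑ i, |u i|) * l2norm (u - z)) ≤ ε :=
    three_mul_mul_le_of_sqrt_mul_le hε (by positivity)
      (by rw [hs, mul_pow, ← mul_assoc]; exact Nat.le_ceil _) hu1
      (sqrt_mul_l2norm_sub_le hScard hStop hz) (l2norm_nonneg _)
  have hquad := dotProduct_mulVec_le_add_of_abs_le (isHermitian_iff_isSymm.mp hA.1) hrows hzu hwu
  have hmain : (1 / α) * (A * Z).trace - ε ≤ z ⬝ᵥ A *ᵥ z := by
    have : (1 / α) * (A * Z).trace ≤ u ⬝ᵥ A *ᵥ u := by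
      rw [one_div_mul_eq_div, div_le_iff₀ (by linarith)]; linarith
    linarith
  refine ⟨?_, ?_, hmain, fun hdom x hx2 hx0 => ?_⟩
  · exact (l0norm_le_card fun i hi => by rw [hz i, if_neg hi]).trans (hScard ▸ min_le_left s n)
  · calc l2norm z ≤ l2norm u := l2norm_le_l2norm_of_abs_le hzu
      _ = √lam := by
        rw [show u = √lam • v from hu, l2norm_smul, hvnorm, mul_one,
          abs_of_nonneg (Real.sqrt_nonneg _)]
      _ ≤ 1 := Real.sqrt_le_one.mpr hlam1
  · have := mul_le_mul_of_nonneg_left (hdom x hx2 hx0) (by positivity : 0 ≤ 1 / α)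
    linarith

/-- **Theorem 3.1 (spca-sdp guarantee).**  Let `A` be PSD with unit-norm rows, `Z` a
feasible solution of the SDP relaxation (`Z` PSD, `tr Z ≤ 1`, `∑|Z_{ij}| ≤ k`),
`u = √λ · v` built from a unit eigenvector `v` of `Z` with eigenvalue `λ ≥ 0`, and
suppose `tr(AZ) ≤ α uᵀAu` and `∑|u_i u_j| ≤ β ∑|Z_{ij}|`.  If `z` keeps the
`s = ⌈9k²β²/ε²⌉` largest-magnitude coordinates of `u`, then `‖z‖₀ ≤ s`, `‖z‖₂ ≤ 1`,
and `zᵀAz ≥ (1/α)·tr(AZ) − ε`; in particular, if `tr(AZ)` dominates the `k`-sparse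
optimum, then `zᵀAz ≥ (1/α)·xᵀAx − ε` for all `k`-sparse unit vectors `x`. -/
theorem stmt1 {n : ℕ} (A : Matrix (Fin n) (Fin n) ℝ) (hA : A.PosSemidef)
    (hrows : ∀ i : Fin n, l2norm (A i) ≤ 1)
    (k : ℕ) (hk : 1 ≤ k) (ε : ℝ) (hε : 0 < ε) (α : ℝ) (hα : 1 ≤ α) (β : ℝ) (hβ : 0 < β)
    (Z : Matrix (Fin n) (Fin n) ℝ) (hZ : Z.PosSemidef) (hZtr : Z.trace ≤ 1)
    (hZ1 : ∑ i, ∑ j, |Z i j| ≤ (k : ℝ))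
    (lam : ℝ) (hlam : 0 ≤ lam) (v : Fin n → ℝ)
    (hv : Z.mulVec v = lam • v) (hvnorm : l2norm v = 1)
    (u : Fin n → ℝ) (hu : u = fun i => Real.sqrt lam * v i)
    (hαZ : (A * Z).trace ≤ α * (u ⬝ᵥ A.mulVec u))
    (hβZ : ∑ i, ∑ j, |u i * u j| ≤ β * ∑ i, ∑ j, |Z i j|)
    (s : ℕ) (hs : s = ⌈9 * (k : ℝ) ^ 2 * β ^ 2 / ε ^ 2⌉₊)
    (S : Finset (Fin n)) (hScard : S.card = min s n)
    (hStop : ∀ i ∈ S, ∀ j ∉ S, |u j| ≤ |u i|)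
    (z : Fin n → ℝ) (hz : ∀ i, z i = if i ∈ S then u i else 0) :
    l0norm z ≤ s ∧ l2norm z ≤ 1 ∧
    (1 / α) * (A * Z).trace - ε ≤ z ⬝ᵥ A.mulVec z ∧
    ((∀ x : Fin n → ℝ, l2norm x ≤ 1 → l0norm x ≤ k → x ⬝ᵥ A.mulVec x ≤ (A * Z).trace) →
      ∀ x : Fin n → ℝ, l2norm x ≤ 1 → l0norm x ≤ k →
        (1 / α) * (x ⬝ᵥ A.mulVec x) - ε ≤ z ⬝ᵥ A.mulVec z) :=
  stmt1_general A hA hrows k hk ε hε α hα β hβ Z hZ hZtr hZ1 lam v hv hvnorm u hu hαZ hβZ s hs S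
    hScard hStop z hz
end

section
/- Let A ∈ ℝ^{n×n} be a PSD matrix with spectral decomposition A = ∑_{i=1}^n λ_i u_i u_iᵀ, where u_1,…,u_n is an orthonormal basis of ℝⁿ and λ_1 ≥ λ_2 ≥ … ≥ λ_n ≥ 0. Then for every integer ℓ with 1 ≤ ℓ ≤ n and every x ∈ ℝⁿ with ‖x‖₂ ≤ 1, ∑_{i=1}^ℓ λ_i ⟨u_i, x⟩² ≥ xᵀAx − trace(A)/ℓ. -/
open Matrix

/-!
Write `c i = ⟨u i, x⟩²`. Then `xᵀAx = ∑ λᵢ cᵢ`, `tr A = ∑ λᵢ` and, by Parseval, `∑ cᵢ = ‖x‖² ≤ 1`.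
Since the eigenvalues decrease, each `λᵢ` with `i ≥ ℓ` is at most the mean `tr A / ℓ` of the top `ℓ`
ones, so the tail `∑_{i ≥ ℓ} λᵢ cᵢ` is at most `tr A / ℓ`.
-/

section Conjugation

variable {m n R : Type*} [Fintype m] [Fintype n] [CommRing R]

theorem dotProduct_mulVec_transpose_mul_diagonal_mul [DecidableEq m] (U : Matrix m n R)
    (d : m → R) (x : n → R) : x ⬝ᵥ (Uᵀ * diagonal d * U) *ᵥ x = ∑ i, d i * (U *ᵥ x) i ^ 2 := by
  rw [← mulVec_mulVec, ← mulVec_mulVec, dotProduct_mulVec, vecMul_transpose]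
  simp only [dotProduct, mulVec_diagonal]
  exact Finset.sum_congr rfl fun i _ => by ring

theorem trace_transpose_mul_diagonal_mul [DecidableEq m] {U : Matrix m n R} (hU : U * Uᵀ = 1)
    (d : m → R) :
    trace (Uᵀ * diagonal d * U) = ∑ i, d i := by
  rw [trace_mul_comm, ← Matrix.mul_assoc, hU, Matrix.one_mul, trace_diagonal]

theorem mulVec_dotProduct_mulVec_self [DecidableEq n] {U : Matrix m n R} (hU : Uᵀ * U = 1)
    (x : n → R) :
    U *ᵥ x ⬝ᵥ U *ᵥ x = x ⬝ᵥ x := by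
  rw [dotProduct_mulVec, ← vecMul_transpose, vecMul_vecMul, hU, vecMul_one]

end Conjugation

theorem Fin.val_mul_le_sum_of_antitone {n : ℕ} {f : Fin n → ℝ} (hf : Antitone f)
    (hf₀ : 0 ≤ f) (i : Fin n) : (i : ℕ) * f i ≤ ∑ j, f j :=
  calc (i : ℕ) * f i = ∑ _j ∈ Finset.Iio i, f i := by
        rw [Finset.sum_const, Fin.card_Iio, nsmul_eq_mul]
    _ ≤ ∑ j ∈ Finset.Iio i, f j :=
        Finset.sum_le_sum fun j hj => hf (Finset.mem_Iio.mp hj).le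
    _ ≤ ∑ j, f j :=
        Finset.sum_le_sum_of_subset_of_nonneg (Finset.subset_univ _) fun j _ _ => hf₀ j

theorem sum_mul_sub_sum_div_le_sum_filter_lt {n ℓ : ℕ} (hℓ : 1 ≤ ℓ) {lam c : Fin n → ℝ}
    (hlam : Antitone lam) (hlam₀ : 0 ≤ lam) (hc₀ : 0 ≤ c) (hc : ∑ i, c i ≤ 1) :
    ∑ i, lam i * c i - (∑ i, lam i) / ℓ ≤
      ∑ i ∈ Finset.univ.filter (fun i : Fin n => (i : ℕ) < ℓ), lam i * c i := by
  set T := (∑ i, lam i) / ℓ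
  have hT : 0 ≤ T := div_nonneg (Finset.sum_nonneg fun i _ => hlam₀ i) ℓ.cast_nonneg
  have h_tail_lam : ∀ i : Fin n, ¬ (i : ℕ) < ℓ → lam i ≤ T := fun i hi => by
    rw [le_div_iff₀ (by exact_mod_cast hℓ), mul_comm]
    calc (ℓ : ℝ) * lam i ≤ (i : ℕ) * lam i :=
          mul_le_mul_of_nonneg_right (by exact_mod_cast not_lt.mp hi) (hlam₀ i)
      _ ≤ ∑ j, lam j := Fin.val_mul_le_sum_of_antitone hlam hlam₀ i
  have h_tail : ∑ i ∈ Finset.univ.filter (fun i : Fin n => ¬ (i : ℕ) < ℓ), lam i * c i ≤ T :=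
    calc _ ≤ ∑ i ∈ Finset.univ.filter (fun i : Fin n => ¬ (i : ℕ) < ℓ), T * c i :=
          Finset.sum_le_sum fun i hi =>
            mul_le_mul_of_nonneg_right (h_tail_lam i (Finset.mem_filter.mp hi).2) (hc₀ i)
      _ ≤ ∑ i, T * c i :=
          Finset.sum_le_sum_of_subset_of_nonneg (Finset.subset_univ _)
            fun i _ _ => mul_nonneg hT (hc₀ i)
      _ ≤ T := by
          rw [← Finset.mul_sum]
          exact mul_le_of_le_one_right hT hc
  rw [← Finset.sum_filter_add_sum_filter_not _ (fun i : Fin n => (i : ℕ) < ℓ)]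
  linarith

theorem stmt2_general {n : ℕ} (A : Matrix (Fin n) (Fin n) ℝ)
    (lam : Fin n → ℝ) (u : Fin n → Fin n → ℝ)
    (h_orth : ∀ i j : Fin n, ∑ t, u i t * u j t = if i = j then (1 : ℝ) else 0)
    (h_dec : ∀ p q : Fin n, A p q = ∑ i, lam i * u i p * u i q)
    (h_mono : ∀ i j : Fin n, i ≤ j → lam j ≤ lam i)
    (h_nonneg : ∀ i : Fin n, 0 ≤ lam i) :
    ∀ ℓ : ℕ, 1 ≤ ℓ → ℓ ≤ n → ∀ x : Fin n → ℝ, l2norm x ≤ 1 →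
      x ⬝ᵥ A.mulVec x - A.trace / ℓ ≤
        ∑ i ∈ Finset.univ.filter (fun i : Fin n => (i : ℕ) < ℓ),
          lam i * (∑ t, u i t * x t) ^ 2 := by
  intro ℓ hℓ _ x hx
  set U : Matrix (Fin n) (Fin n) ℝ := Matrix.of u
  have hUUt : U * Uᵀ = 1 := by
    ext i j
    simpa [U, mul_apply, one_apply] using h_orth i j
  have hA : A = Uᵀ * diagonal lam * U := by
    ext p q
    rw [mul_apply]
    simp only [h_dec, mul_diagonal, transpose_apply, U, of_apply]
    exact Finset.sum_congr rfl fun i _ => by ring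
  have hUx : ∑ i, (U *ᵥ x) i ^ 2 ≤ 1 := by
    have hx2 : x ⬝ᵥ x ≤ 1 := by
      simpa [l2norm, dotProduct, ← sq] using hx
    calc ∑ i, (U *ᵥ x) i ^ 2 = x ⬝ᵥ x := by
          rw [← mulVec_dotProduct_mulVec_self (mul_eq_one_comm.mp hUUt) x]
          simp only [dotProduct, sq]
      _ ≤ 1 := hx2
  rw [hA, dotProduct_mulVec_transpose_mul_diagonal_mul, trace_transpose_mul_diagonal_mul hUUt]
  exact sum_mul_sub_sum_div_le_sum_filter_lt hℓ h_mono h_nonneg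
    (fun i => sq_nonneg _) hUx

/-- **Lemma 2.2.**  For a PSD matrix `A` with spectral decomposition
`A = ∑ i, lam i • u i (u i)ᵀ` (eigenvalues in nonincreasing order), every integer
`1 ≤ ℓ ≤ n`, and every vector `x` with `‖x‖₂ ≤ 1`,
`∑_{i<ℓ} lam i ⟨u i, x⟩² ≥ xᵀAx − tr(A)/ℓ`. -/
theorem stmt2 {n : ℕ} (A : Matrix (Fin n) (Fin n) ℝ) (hA : A.PosSemidef)
    (lam : Fin n → ℝ) (u : Fin n → Fin n → ℝ)
    (h_orth : ∀ i j : Fin n, ∑ t, u i t * u j t = if i = j then (1 : ℝ) else 0)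
    (h_dec : ∀ p q : Fin n, A p q = ∑ i, lam i * u i p * u i q)
    (h_mono : ∀ i j : Fin n, i ≤ j → lam j ≤ lam i)
    (h_nonneg : ∀ i : Fin n, 0 ≤ lam i) :
    ∀ ℓ : ℕ, 1 ≤ ℓ → ℓ ≤ n → ∀ x : Fin n → ℝ, l2norm x ≤ 1 →
      x ⬝ᵥ A.mulVec x - A.trace / ℓ ≤
        ∑ i ∈ Finset.univ.filter (fun i : Fin n => (i : ℕ) < ℓ),
          lam i * (∑ t, u i t * x t) ^ 2 :=
  stmt2_general A lam u h_orth h_dec h_mono h_nonneg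
end

section
/- Let A ∈ ℝ^{n×n} be a PSD matrix with spectral decomposition A = ∑_{i=1}^n λ_i u_i u_iᵀ, where u_1,…,u_n is an orthonormal basis of ℝⁿ and λ_1 ≥ λ_2 ≥ … ≥ λ_n ≥ 0. Let k ≥ 1 be an integer, ε ∈ (0,1], and ℓ an integer with 1 ≤ ℓ ≤ n. Define R = { j ∈ {1,…,n} : ∑_{i=1}^ℓ ((u_i)_j)² ≥ ε²/k }, and for y ∈ ℝⁿ write g(y) = ∑_{i=1}^ℓ λ_i ⟨u_i, y⟩². Suppose z ∈ ℝⁿ satisfies ‖z‖₂ ≤ 1, z_j = 0 for all j ∉ R, and g(z) ≥ g(y) for every y ∈ ℝⁿ with ‖y‖₂ ≤ 1 and y_j = 0 for all j ∉ R. Then for every x ∈ ℝⁿ with ‖x‖₂ ≤ 1 and ‖x‖₀ ≤ k, g(x) ≤ zᵀAz + 3ε·λ_1. -/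
open Matrix

/-!
Split the sparse unit vector `x` along the threshold set `R` as `x = x_R + x_C`. Since `x_R` is a
competitor in the maximization, `g(x_R) ≤ g(z) ≤ zᵀAz`, and `g(x_R) ≤ λ₁` by Bessel's inequality.
Every coordinate outside `R` carries less than `ε²/k` of the mass of `u_1, …, u_ℓ` and `x_C` has
at most `k` nonzero coordinates, so Cauchy–Schwarz gives `∑_{i ≤ ℓ} ⟨u_i, x_C⟩² ≤ ε²`, hence
`g(x_C) ≤ λ₁ε²`; Cauchy–Schwarz for the form `g` then bounds the cross term by `λ₁ε`. Altogether
`g(x) ≤ zᵀAz + 2λ₁ε + λ₁ε² ≤ zᵀAz + 3ελ₁`.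
-/

section

variable {ι κ : Type*} [Fintype κ]

theorem sum_sq_dotProduct_le_of_orthonormal [DecidableEq ι] {u : ι → κ → ℝ}
    (hu : ∀ i j, u i ⬝ᵥ u j = if i = j then 1 else 0) (s : Finset ι) (y : κ → ℝ) :
    ∑ i ∈ s, (u i ⬝ᵥ y) ^ 2 ≤ ∑ t, y t ^ 2 := by
  have hv : Orthonormal ℝ fun i => WithLp.toLp 2 (u i) :=
    orthonormal_iff_ite.2 fun i j => (EuclideanSpace.inner_toLp_toLp _ _).trans
      ((dotProduct_comm _ _).trans (hu i j))
  simpa [EuclideanSpace.real_norm_sq_eq, EuclideanSpace.inner_toLp_toLp, dotProduct_comm]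
    using hv.sum_inner_products_le (x := WithLp.toLp 2 y) (s := s)

theorem dotProduct_mulVec_eq_sum_mul_sq [Fintype ι] {A : Matrix κ κ ℝ} {lam : ι → ℝ}
    {u : ι → κ → ℝ} (hA : ∀ p q, A p q = ∑ i, lam i * u i p * u i q) (z : κ → ℝ) :
    z ⬝ᵥ A *ᵥ z = ∑ i, lam i * (u i ⬝ᵥ z) ^ 2 := by
  simp only [dotProduct, mulVec, hA, sq, Finset.mul_sum, Finset.sum_mul]
  rw [Finset.sum_comm (γ := ι)]
  refine Finset.sum_congr rfl fun p _ => ?_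
  rw [Finset.sum_comm]
  exact Finset.sum_congr rfl fun i _ => Finset.sum_congr rfl fun q _ => by ring

theorem sum_sq_dotProduct_le_card_support_mul {s : Finset ι} {u : ι → κ → ℝ} {y : κ → ℝ}
    {c : ℝ} (hc : ∀ t, y t ≠ 0 → ∑ i ∈ s, u i t ^ 2 ≤ c) :
    ∑ i ∈ s, (u i ⬝ᵥ y) ^ 2 ≤ (Function.support y).ncard * c * ∑ t, y t ^ 2 := by
  classical
  set T := Finset.univ.filter fun t => y t ≠ 0
  have hcard : (Function.support y).ncard = T.card := by
    rw [← Set.ncard_coe_finset]; congr; ext; simp [T]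
  have hdot : ∀ i, u i ⬝ᵥ y = ∑ t ∈ T, u i t * y t := fun i =>
    (Finset.sum_filter_of_ne fun t _ h => right_ne_zero_of_mul h).symm
  have hy : ∑ t ∈ T, y t ^ 2 = ∑ t, y t ^ 2 :=
    Finset.sum_filter_of_ne fun t _ h => by simpa using h
  calc ∑ i ∈ s, (u i ⬝ᵥ y) ^ 2
      ≤ ∑ i ∈ s, (∑ t ∈ T, u i t ^ 2) * ∑ t, y t ^ 2 := by
        gcongr with i
        rw [hdot, ← hy]
        exact Finset.sum_mul_sq_le_sq_mul_sq _ _ _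
    _ = (∑ t ∈ T, ∑ i ∈ s, u i t ^ 2) * ∑ t, y t ^ 2 := by
        rw [← Finset.sum_mul, Finset.sum_comm]
    _ ≤ (T.card * c) * ∑ t, y t ^ 2 := by
        refine mul_le_mul_of_nonneg_right ?_ (by positivity)
        simpa using Finset.sum_le_card_nsmul T _ c fun t ht => hc t (Finset.mem_filter.1 ht).2
    _ = _ := by rw [hcard]

theorem sum_sq_dotProduct_le_of_sparse {s : Finset ι} {u : ι → κ → ℝ} {y : κ → ℝ} {k : ℕ}
    {c : ℝ} (hc : 0 ≤ c) (hy0 : (Function.support y).ncard ≤ k) (hy2 : ∑ t, y t ^ 2 ≤ 1)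
    (hu : ∀ t, y t ≠ 0 → ∑ i ∈ s, u i t ^ 2 ≤ c / k) :
    ∑ i ∈ s, (u i ⬝ᵥ y) ^ 2 ≤ c := by
  have hcard : (Function.support y).ncard * (c / k) ≤ c := by
    rw [mul_div_left_comm]
    exact mul_le_of_le_one_right hc (div_le_one_of_le₀ (by exact_mod_cast hy0) k.cast_nonneg)
  calc _ ≤ (Function.support y).ncard * (c / k) * ∑ t, y t ^ 2 :=
        sum_sq_dotProduct_le_card_support_mul hu
    _ ≤ c * 1 := mul_le_mul hcard hy2 (by positivity) hc
    _ = c := mul_one c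

end

section

variable {ι : Type*} {s : Finset ι} {w a b : ι → ℝ}

theorem sum_mul_sq_le_mul_sum_sq {M : ℝ} (hw : ∀ i ∈ s, w i ≤ M) :
    ∑ i ∈ s, w i * a i ^ 2 ≤ M * ∑ i ∈ s, a i ^ 2 := by
  rw [Finset.mul_sum]
  exact Finset.sum_le_sum fun i hi => mul_le_mul_of_nonneg_right (hw i hi) (sq_nonneg _)

theorem sum_mul_mul_sq_le (hw : ∀ i ∈ s, 0 ≤ w i) (a b : ι → ℝ) :
    (∑ i ∈ s, w i * (a i * b i)) ^ 2 ≤ (∑ i ∈ s, w i * a i ^ 2) * ∑ i ∈ s, w i * b i ^ 2 :=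
  Finset.sum_sq_le_sum_mul_sum_of_sq_le_mul s (fun i hi => mul_nonneg (hw i hi) (sq_nonneg _))
    (fun i hi => mul_nonneg (hw i hi) (sq_nonneg _)) fun i _ => le_of_eq (by ring)

theorem sum_mul_add_sq_le (hw : ∀ i ∈ s, 0 ≤ w i) {M δ : ℝ} (hM : 0 ≤ M) (hδ : 0 ≤ δ)
    (ha : ∑ i ∈ s, w i * a i ^ 2 ≤ M) (hb : ∑ i ∈ s, w i * b i ^ 2 ≤ M * δ ^ 2) :
    ∑ i ∈ s, w i * (a i + b i) ^ 2 ≤ ∑ i ∈ s, w i * a i ^ 2 + 2 * (M * δ) + M * δ ^ 2 := by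
  have hexpand : ∑ i ∈ s, w i * (a i + b i) ^ 2 = ∑ i ∈ s, w i * a i ^ 2
      + 2 * ∑ i ∈ s, w i * (a i * b i) + ∑ i ∈ s, w i * b i ^ 2 := by
    simp only [Finset.mul_sum, ← Finset.sum_add_distrib]
    exact Finset.sum_congr rfl fun i _ => by ring
  have hcross : ∑ i ∈ s, w i * (a i * b i) ≤ M * δ := by
    refine (abs_le_of_sq_le_sq' ?_ (by positivity)).2
    calc _ ≤ _ := sum_mul_mul_sq_le hw a b
      _ ≤ M * (M * δ ^ 2) :=
        mul_le_mul ha hb (Finset.sum_nonneg fun i hi => mul_nonneg (hw i hi) (sq_nonneg _)) hM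
      _ = (M * δ) ^ 2 := by ring
  linarith

end

section

variable {n : ℕ}

theorem l2norm_le_one_iff {x : Fin n → ℝ} : l2norm x ≤ 1 ↔ ∑ i, x i ^ 2 ≤ 1 :=
  Real.sqrt_le_one

theorem l2norm_indicator_le (R : Set (Fin n)) (x : Fin n → ℝ) :
    l2norm (R.indicator x) ≤ l2norm x := by
  refine Real.sqrt_le_sqrt (Finset.sum_le_sum fun t _ => ?_)
  by_cases ht : t ∈ R <;> simp [ht, sq_nonneg]

theorem l0norm_indicator_le (R : Set (Fin n)) (x : Fin n → ℝ) :
    l0norm (R.indicator x) ≤ l0norm x :=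
  Set.ncard_le_ncard (by rw [Set.support_indicator]; exact Set.inter_subset_right)
    (Set.toFinite _)

theorem sum_sq_dotProduct_indicator_compl_le {ι : Type*} {s : Finset ι} {u : ι → Fin n → ℝ}
    {x : Fin n → ℝ} {k : ℕ} {c : ℝ} (hc : 0 ≤ c) (hx2 : l2norm x ≤ 1) (hx0 : l0norm x ≤ k) :
    ∑ i ∈ s, (u i ⬝ᵥ {j | c / k ≤ ∑ i ∈ s, u i j ^ 2}ᶜ.indicator x) ^ 2 ≤ c :=
  sum_sq_dotProduct_le_of_sparse hc ((l0norm_indicator_le _ x).trans hx0)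
    (l2norm_le_one_iff.1 ((l2norm_indicator_le _ x).trans hx2))
    fun _ ht => le_of_lt <| not_le.1 <| Set.mem_of_indicator_ne_zero ht

end

/-- **Eqns. (1)–(6) in the proof of Theorem 2.1.**  With `A` PSD with spectral
decomposition `A = ∑ i, lam i • u i (u i)ᵀ`, the thresholding set
`R = {j : ∑_{i<ℓ} (u i j)² ≥ ε²/k}`, and `g(y) = ∑_{i<ℓ} lam i ⟨u i, y⟩²`,
any maximizer `z` of `g` over unit vectors supported on `R` satisfies
`g(x) ≤ zᵀAz + 3ε·lam 1` for every `k`-sparse unit vector `x`. -/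
theorem stmt7 {n : ℕ} (A : Matrix (Fin n) (Fin n) ℝ)
    (lam : Fin n → ℝ) (u : Fin n → Fin n → ℝ)
    (h_orth : ∀ i j : Fin n, ∑ t, u i t * u j t = if i = j then (1 : ℝ) else 0)
    (h_dec : ∀ p q : Fin n, A p q = ∑ i, lam i * u i p * u i q)
    (h_mono : ∀ i j : Fin n, i ≤ j → lam j ≤ lam i)
    (h_nonneg : ∀ i : Fin n, 0 ≤ lam i)
    (k : ℕ) (ε : ℝ) (hε : 0 < ε) (hε1 : ε ≤ 1)
    (ℓ : ℕ) (hℓ1 : 1 ≤ ℓ) (hℓn : ℓ ≤ n)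
    (R : Set (Fin n))
    (hR : R = {j : Fin n |
      ε ^ 2 / k ≤ ∑ i ∈ Finset.univ.filter (fun i : Fin n => (i : ℕ) < ℓ), (u i j) ^ 2})
    (g : (Fin n → ℝ) → ℝ)
    (hg : g = fun y => ∑ i ∈ Finset.univ.filter (fun i : Fin n => (i : ℕ) < ℓ),
      lam i * (∑ t, u i t * y t) ^ 2)
    (z : Fin n → ℝ)
    (hzmax : ∀ y : Fin n → ℝ, l2norm y ≤ 1 → (∀ j ∉ R, y j = 0) → g y ≤ g z) :
    ∀ x : Fin n → ℝ, l2norm x ≤ 1 → l0norm x ≤ k →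
      g x ≤ z ⬝ᵥ A.mulVec z + 3 * ε * lam ⟨0, by omega⟩ := by
  intro x hx2 hx0
  set L := Finset.univ.filter fun i : Fin n => (i : ℕ) < ℓ
  set lam₁ := lam ⟨0, by omega⟩
  have hlam₁ : ∀ i, lam i ≤ lam₁ := fun i => h_mono _ i (Fin.mk_le_mk.2 i.val.zero_le)
  have hlam₁_nonneg : 0 ≤ lam₁ := h_nonneg _
  have hg_apply : ∀ y, g y = ∑ i ∈ L, lam i * (u i ⬝ᵥ y) ^ 2 := fun y => by rw [hg]; rfl
  set xR := R.indicator x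
  set xC := Rᶜ.indicator x
  have hxR : l2norm xR ≤ 1 := (l2norm_indicator_le R x).trans hx2
  have hgz : g z ≤ z ⬝ᵥ A *ᵥ z := by
    rw [hg_apply, dotProduct_mulVec_eq_sum_mul_sq h_dec]
    exact Finset.sum_le_sum_of_subset_of_nonneg L.subset_univ fun i _ _ =>
      mul_nonneg (h_nonneg i) (sq_nonneg _)
  have hgxR : g xR ≤ g z := hzmax xR hxR fun j hj => Set.indicator_of_notMem hj x
  have hxR_le : ∑ i ∈ L, lam i * (u i ⬝ᵥ xR) ^ 2 ≤ lam₁ :=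
    (sum_mul_sq_le_mul_sum_sq fun i _ => hlam₁ i).trans <| mul_le_of_le_one_right hlam₁_nonneg <|
      (sum_sq_dotProduct_le_of_orthonormal h_orth L xR).trans (l2norm_le_one_iff.1 hxR)
  have hxC_small : ∑ i ∈ L, (u i ⬝ᵥ xC) ^ 2 ≤ ε ^ 2 := by
    simpa only [xC, hR] using sum_sq_dotProduct_indicator_compl_le (sq_nonneg ε) hx2 hx0
  have hxC_le : ∑ i ∈ L, lam i * (u i ⬝ᵥ xC) ^ 2 ≤ lam₁ * ε ^ 2 :=
    (sum_mul_sq_le_mul_sum_sq fun i _ => hlam₁ i).trans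
      (mul_le_mul_of_nonneg_left hxC_small hlam₁_nonneg)
  calc g x = ∑ i ∈ L, lam i * (u i ⬝ᵥ xR + u i ⬝ᵥ xC) ^ 2 := by
        rw [hg_apply]
        simp only [xR, xC, ← dotProduct_add, Set.indicator_self_add_compl]
    _ ≤ g xR + 2 * (lam₁ * ε) + lam₁ * ε ^ 2 := by
        rw [hg_apply]
        exact sum_mul_add_sq_le (fun i _ => h_nonneg i) hlam₁_nonneg hε.le hxR_le hxC_le
    _ ≤ z ⬝ᵥ A *ᵥ z + 3 * ε * lam₁ := by
        nlinarith [mul_le_mul_of_nonneg_left (pow_le_of_le_one hε.le hε1 two_ne_zero) hlam₁_nonneg]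
end

section
/- Let A ∈ ℝ^{n×n} be a symmetric matrix each of whose rows has Euclidean norm at most 1, let u ∈ ℝⁿ, and let z ∈ ℝⁿ be obtained from u by zeroing out some coordinates (i.e., for every i, either z_i = u_i or z_i = 0). Then zᵀAz ≥ uᵀAu − 3‖u‖₁·‖u−z‖₂. -/
open Matrix

/-- ℓ₁ norm of a vector in ℝⁿ. -/
def l1norm {n : ℕ} (x : Fin n → ℝ) : ℝ := ∑ i, |x i|

/-!
Writing `w = u - z`, symmetry of `A` gives `uᵀAu - zᵀAz = (u + z)ᵀA w`. Every entry of `A w` is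
a row of `A` dotted with `w`, hence bounded by `‖w‖₂` (Cauchy–Schwarz), so Hölder bounds the
difference by `‖u + z‖₁ ‖w‖₂ ≤ 2 ‖u‖₁ ‖w‖₂`.
-/

namespace Matrix.IsSymm

variable {ι R : Type*} [Fintype ι] [CommRing R] {A : Matrix ι ι R}

theorem dotProduct_mulVec_comm (hA : A.IsSymm) (x y : ι → R) :
    x ⬝ᵥ A *ᵥ y = y ⬝ᵥ A *ᵥ x := by
  rw [dotProduct_mulVec, dotProduct_comm, ← vecMul_transpose, hA.eq]

theorem dotProduct_mulVec_self_sub (hA : A.IsSymm) (u z : ι → R) :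
    u ⬝ᵥ A *ᵥ u - z ⬝ᵥ A *ᵥ z = (u + z) ⬝ᵥ A *ᵥ (u - z) := by
  simp only [mulVec_sub, add_dotProduct, dotProduct_sub, hA.dotProduct_mulVec_comm z u]
  ring

end Matrix.IsSymm

section Norms

variable {n : ℕ}

theorem l1norm_nonneg (x : Fin n → ℝ) : 0 ≤ l1norm x :=
  Finset.sum_nonneg fun i _ => abs_nonneg (x i)

theorem abs_dotProduct_le_l1norm_mul {x y : Fin n → ℝ} {M : ℝ} (hy : ∀ i, |y i| ≤ M) :
    |x ⬝ᵥ y| ≤ l1norm x * M := by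
  calc |x ⬝ᵥ y| ≤ ∑ i, |x i| * |y i| := by
        simpa only [dotProduct, abs_mul] using Finset.abs_sum_le_sum_abs (fun i => x i * y i) _
    _ ≤ ∑ i, |x i| * M := by gcongr with i; exact hy i
    _ = l1norm x * M := (Finset.sum_mul _ _ _).symm

theorem abs_mulVec_apply_le {m : Type*} {A : Matrix m (Fin n) ℝ}
    (hrows : ∀ i, l2norm (A i) ≤ 1) (w : Fin n → ℝ) (i : m) :
    |(A *ᵥ w) i| ≤ l2norm w :=
  calc |(A *ᵥ w) i| ≤ l2norm (A i) * l2norm w := abs_dotProduct_le_l2norm_mul_l2norm _ _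
    _ ≤ l2norm w := mul_le_of_le_one_left (l2norm_nonneg w) (hrows i)

theorem l1norm_add_le_two_mul_of_forall_eq_or_eq_zero {u z : Fin n → ℝ}
    (hz : ∀ i, z i = u i ∨ z i = 0) :
    l1norm (u + z) ≤ 2 * l1norm u := by
  rw [l1norm, l1norm, Finset.mul_sum]
  refine Finset.sum_le_sum fun i _ => ?_
  have hzu : |z i| ≤ |u i| := by rcases hz i with h | h <;> simp [h]
  calc |u i + z i| ≤ |u i| + |z i| := abs_add_le _ _
    _ ≤ 2 * |u i| := by linarith

end Norms

/-- **Bound `zᵀAz ≥ uᵀAu − 3√(βk)‖u−z‖₂` from the proof of Theorem 3.1.**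
If `A` is symmetric with rows of Euclidean norm at most `1` and `z` is obtained from
`u` by zeroing out some coordinates, then `zᵀAz ≥ uᵀAu − 3‖u‖₁·‖u−z‖₂`. -/
theorem stmt9 {n : ℕ} (A : Matrix (Fin n) (Fin n) ℝ) (hA : A.IsSymm)
    (hrows : ∀ i : Fin n, l2norm (A i) ≤ 1)
    (u z : Fin n → ℝ) (hz : ∀ i, z i = u i ∨ z i = 0) :
    u ⬝ᵥ A.mulVec u - 3 * l1norm u * l2norm (u - z) ≤ z ⬝ᵥ A.mulVec z := by
  have hdiff : |u ⬝ᵥ A *ᵥ u - z ⬝ᵥ A *ᵥ z| ≤ l1norm (u + z) * l2norm (u - z) := by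
    rw [hA.dotProduct_mulVec_self_sub]
    exact abs_dotProduct_le_l1norm_mul (abs_mulVec_apply_le hrows (u - z))
  have hl1 : l1norm (u + z) ≤ 3 * l1norm u := by
    linarith [l1norm_add_le_two_mul_of_forall_eq_or_eq_zero hz, l1norm_nonneg u]
  have hcoef : l1norm (u + z) * l2norm (u - z) ≤ 3 * l1norm u * l2norm (u - z) :=
    mul_le_mul_of_nonneg_right hl1 (l2norm_nonneg _)
  linarith [(abs_le.mp hdiff).2]
end
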